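/- arXiv:2202.05076 — 3 statements merged into one kernel-verified Lean document; each statement's English description precedes it below -/
import Mathlib

section
/- Let γ∈(0,1/2). For all 0≤s<t<τ, ∫_s^t (τ−r)^{−2γ}(r−s)^{1−2γ} dr ≤ C · min( (τ−t)^{−2γ}(t−s)^{2−2γ}, (t−s)^{2−4γ} ), with C depending only on γ. -/
/-!
Both bounds come from freezing one factor of the integrand at its supremum on `[s, t]` and
integrating the other one exactly. Freezing `(τ - r)^(-2γ) ≤ (τ - t)^(-2γ)` leaves
`∫ (r - s)^(1-2γ) = (t - s)^(2-2γ) / (2 - 2γ)`. Freezing `(r - s)^(1-2γ) ≤ (t - s)^(1-2γ)` leaves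
`∫ (τ - r)^(-2γ) = ((τ - s)^(1-2γ) - (τ - t)^(1-2γ)) / (1 - 2γ)`, and subadditivity of
`x ↦ x^(1-2γ)` bounds the difference by `(t - s)^(1-2γ)`. Hence `C = 1 / (1 - 2γ)` works.
-/

open MeasureTheory Real

lemma integral_sub_const_rpow {p : ℝ} (hp : -1 < p) (s b : ℝ) :
    ∫ r in s..b, (r - s) ^ p = (b - s) ^ (p + 1) / (p + 1) := by
  rw [intervalIntegral.integral_comp_sub_right (fun u => u ^ p), sub_self,
    integral_rpow (Or.inl hp), zero_rpow (by linarith), sub_zero]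

lemma integral_const_sub_rpow {p : ℝ} (hp : -1 < p) (τ a b : ℝ) :
    ∫ r in a..b, (τ - r) ^ p = ((τ - a) ^ (p + 1) - (τ - b) ^ (p + 1)) / (p + 1) := by
  rw [intervalIntegral.integral_comp_sub_left (fun u => u ^ p), integral_rpow (Or.inl hp)]

lemma intervalIntegrable_sub_const_rpow {p : ℝ} (hp : -1 < p) (s a b : ℝ) :
    IntervalIntegrable (fun r => (r - s) ^ p) volume a b := by
  simpa using
    (intervalIntegral.intervalIntegrable_rpow' hp (a := a - s) (b := b - s)).comp_sub_right s

lemma intervalIntegrable_const_sub_rpow {p : ℝ} (hp : -1 < p) (τ a b : ℝ) :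
    IntervalIntegrable (fun r => (τ - r) ^ p) volume a b := by
  simpa using
    (intervalIntegral.intervalIntegrable_rpow' hp (a := τ - a) (b := τ - b)).comp_sub_left τ

lemma rpow_sub_rpow_le_rpow_sub {p x y : ℝ} (hp : 0 ≤ p) (hp1 : p ≤ 1) (hx : 0 ≤ x)
    (hxy : x ≤ y) : y ^ p - x ^ p ≤ (y - x) ^ p := by
  have := rpow_add_le_add_rpow hx (sub_nonneg.2 hxy) hp hp1
  rw [add_sub_cancel] at this
  linarith

section Kernel

variable {α β s t τ : ℝ}

lemma integral_kernel_le_gap (hα : 0 ≤ α) (hβ : -1 < β) (hst : s ≤ t) (htτ : t < τ) :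
    ∫ r in s..t, (τ - r) ^ (-α) * (r - s) ^ β
      ≤ (τ - t) ^ (-α) * ((t - s) ^ (β + 1) / (β + 1)) := by
  rw [← integral_sub_const_rpow hβ, ← intervalIntegral.integral_const_mul]
  refine intervalIntegral.integral_mono_on hst ?_ ?_ fun r hr => ?_
  · refine (intervalIntegrable_sub_const_rpow hβ s s t).continuousOn_mul ?_
    refine (continuousOn_const.sub continuousOn_id).rpow_const fun r hr => Or.inl ?_
    rw [Set.uIcc_of_le hst] at hr
    exact (sub_pos.2 (hr.2.trans_lt htτ)).ne'
  · exact (intervalIntegrable_sub_const_rpow hβ s s t).const_mul _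
  · exact mul_le_mul_of_nonneg_right
      (rpow_le_rpow_of_nonpos (sub_pos.2 htτ) (by linarith [hr.2]) (neg_nonpos.2 hα))
      (rpow_nonneg (sub_nonneg.2 hr.1) _)

lemma integral_kernel_le_length (hα : 0 ≤ α) (hα1 : α < 1) (hβ : 0 ≤ β) (hst : s ≤ t)
    (htτ : t ≤ τ) :
    ∫ r in s..t, (τ - r) ^ (-α) * (r - s) ^ β ≤ (t - s) ^ (β + 1 - α) / (1 - α) := by
  calc ∫ r in s..t, (τ - r) ^ (-α) * (r - s) ^ β
      ≤ ∫ r in s..t, (τ - r) ^ (-α) * (t - s) ^ β := by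
        refine intervalIntegral.integral_mono_on hst ?_ ?_ fun r hr => ?_
        · exact (intervalIntegrable_const_sub_rpow (by linarith) τ s t).mul_continuousOn
            ((continuousOn_id.sub continuousOn_const).rpow_const fun _ _ => Or.inr hβ)
        · exact (intervalIntegrable_const_sub_rpow (by linarith) τ s t).mul_const _
        · exact mul_le_mul_of_nonneg_left
            (rpow_le_rpow (sub_nonneg.2 hr.1) (by linarith [hr.2]) hβ)
            (rpow_nonneg (by linarith [hr.2]) _)
    _ = ((τ - s) ^ (1 - α) - (τ - t) ^ (1 - α)) / (1 - α) * (t - s) ^ β := by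
        rw [intervalIntegral.integral_mul_const, integral_const_sub_rpow (by linarith),
          neg_add_eq_sub]
    _ ≤ (t - s) ^ (1 - α) / (1 - α) * (t - s) ^ β := by
        gcongr
        simpa only [sub_sub_sub_cancel_left] using rpow_sub_rpow_le_rpow_sub (p := 1 - α)
          (by linarith) (by linarith) (sub_nonneg.2 htτ) (sub_le_sub_left hst τ)
    _ = (t - s) ^ (β + 1 - α) / (1 - α) := by
        rw [div_mul_eq_mul_div, ← rpow_add' (sub_nonneg.2 hst) (by linarith)]
        ring_nf

end Kernel

theorem stmt_4 (γ : ℝ) (hγ0 : 0 < γ) (hγ : γ < 1/2) :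
    ∃ C > 0, ∀ s t τ : ℝ, 0 ≤ s → s < t → t < τ →
      (∫ r in s..t, (τ - r) ^ (-(2*γ)) * (r - s) ^ (1 - 2*γ))
        ≤ C * min ((τ - t) ^ (-(2*γ)) * (t - s) ^ (2 - 2*γ)) ((t - s) ^ (2 - 4*γ)) := by
  have hβ : 0 < 1 - 2 * γ := by linarith
  refine ⟨1 / (1 - 2 * γ), by positivity, fun s t τ _ hst htτ => ?_⟩
  have hgap := integral_kernel_le_gap (by linarith : 0 ≤ 2 * γ) (by linarith : -1 < 1 - 2 * γ)
    hst.le htτ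
  have hlength := integral_kernel_le_length (by linarith : 0 ≤ 2 * γ) (by linarith) hβ.le
    hst.le htτ.le
  rw [show 1 - 2 * γ + 1 = 2 - 2 * γ by ring] at hgap
  rw [show 1 - 2 * γ + 1 - 2 * γ = 2 - 4 * γ by ring] at hlength
  have hC : 1 / (2 - 2 * γ) ≤ 1 / (1 - 2 * γ) := by gcongr; linarith
  rw [mul_min_of_nonneg _ _ (by positivity)]
  refine le_min (hgap.trans ?_) (hlength.trans_eq (by ring))
  rw [mul_div_assoc', div_eq_mul_one_div _ (2 - 2 * γ), mul_comm (1 / _)]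
  gcongr
end

section
/- Let H∈(1/2,1), γ∈(0,2H−1). For 0≤s<t<τ, the quadruple integral ∫_s^t ∫_s^{r_1} (τ−r_1)^{−γ}(τ−r_2)^{−γ}|r_1−r_2|^{2H−2}(r_1−s)^{2H−2γ} dr_2 dr_1 ≤ C · min( (τ−t)^{−2γ}(t−s)^{4H−2γ}, (t−s)^{4H−4γ} ), where C depends only on H and γ. -/
/-!
Bound the two factors `(τ - r)^(-γ)` in two ways. Since `r₂ ≤ r₁ ≤ t`, both are at most
`(τ - t)^(-γ)`, which leaves `∫∫ |r₁ - r₂|^(2H-2) (r₁ - s)^(2H-2γ)`, of order `(t - s)^(4H-2γ)`.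
Alternatively `(τ - r₁)^(-γ) ≤ (t - r₁)^(-γ)` and `(τ - r₂)^(-γ) ≤ (r₁ - r₂)^(-γ)`; both
singularities stay integrable because `γ < 2H - 1 < 1`, and the result is of order `(t - s)^(4H-4γ)`.
-/

open MeasureTheory Real intervalIntegral Set

lemma integral_sub_rpow (a b : ℝ) {p : ℝ} (hp : -1 < p) :
    ∫ x in a..b, (b - x) ^ p = (b - a) ^ (p + 1) / (p + 1) := by
  rw [integral_comp_sub_left (fun x => x ^ p) b, sub_self, integral_rpow (Or.inl hp),
    zero_rpow (by linarith : p + 1 ≠ 0), sub_zero]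

lemma intervalIntegrable_sub_rpow (a b : ℝ) {p : ℝ} (hp : -1 < p) :
    IntervalIntegrable (fun x => (b - x) ^ p) volume a b := by
  simpa using ((intervalIntegrable_rpow' hp).comp_sub_left b (a := b - b) (b := b - a)).symm

lemma integral_le_mul_sub_rpow {f : ℝ → ℝ} {a b c p : ℝ} (hab : a ≤ b) (hp : -1 < p)
    (hc : 0 ≤ c) (hf : ∀ x ∈ Ioo a b, f x ≤ c * (b - x) ^ p) :
    ∫ x in a..b, f x ≤ c * ((b - a) ^ (p + 1) / (p + 1)) := by
  have hbound : 0 ≤ c * ((b - a) ^ (p + 1) / (p + 1)) :=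
    mul_nonneg hc (div_nonneg (rpow_nonneg (sub_nonneg.mpr hab) _) (by linarith))
  by_cases hfi : IntervalIntegrable f volume a b
  · calc ∫ x in a..b, f x ≤ ∫ x in a..b, c * (b - x) ^ p :=
          integral_mono_on_of_le_Ioo hab hfi
            ((intervalIntegrable_sub_rpow a b hp).const_mul c) hf
      _ = c * ((b - a) ^ (p + 1) / (p + 1)) := by
          rw [intervalIntegral.integral_const_mul, integral_sub_rpow a b hp]
  · rwa [integral_undef hfi]

lemma integral_le_mul_sub {f : ℝ → ℝ} {a b c : ℝ} (hab : a ≤ b) (hc : 0 ≤ c)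
    (hf : ∀ x ∈ Ioo a b, f x ≤ c) :
    ∫ x in a..b, f x ≤ c * (b - a) := by
  simpa using integral_le_mul_sub_rpow (p := 0) hab (by norm_num) hc (by simpa using hf)

noncomputable def volterraIntegrand (H γ s τ r₁ r₂ : ℝ) : ℝ :=
  (τ - r₁) ^ (-γ) * (τ - r₂) ^ (-γ) * |r₁ - r₂| ^ (2*H - 2) * (r₁ - s) ^ (2*H - 2*γ)

section Bounds

variable {H γ s t τ : ℝ}

lemma volterraIntegrand_le_far (hγ : 0 ≤ γ) (htτ : t < τ) {r₁ r₂ : ℝ} (hr₁ : r₁ ≤ t)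
    (hr₂ : r₂ ∈ Ioo s r₁) :
    volterraIntegrand H γ s τ r₁ r₂
      ≤ (τ - t) ^ (-(2*γ)) * (r₁ - s) ^ (2*H - 2*γ) * (r₁ - r₂) ^ (2*H - 2) := by
  have hτt : 0 < τ - t := by linarith
  have h₁ : (τ - r₁) ^ (-γ) ≤ (τ - t) ^ (-γ) :=
    rpow_le_rpow_of_nonpos hτt (by linarith) (by linarith)
  have h₂ : (τ - r₂) ^ (-γ) ≤ (τ - t) ^ (-γ) :=
    rpow_le_rpow_of_nonpos hτt (by linarith [hr₂.2]) (by linarith)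
  have hsq : (τ - t) ^ (-γ) * (τ - t) ^ (-γ) = (τ - t) ^ (-(2*γ)) := by
    rw [← rpow_add hτt]; ring_nf
  have hr₂τ : 0 < τ - r₂ := by linarith [hr₂.2]
  calc volterraIntegrand H γ s τ r₁ r₂
      = (τ - r₁) ^ (-γ) * (τ - r₂) ^ (-γ) * ((r₁ - r₂) ^ (2*H - 2) * (r₁ - s) ^ (2*H - 2*γ)) := by
        rw [volterraIntegrand, abs_of_pos (sub_pos.mpr hr₂.2)]; ring
    _ ≤ (τ - t) ^ (-γ) * (τ - t) ^ (-γ) * ((r₁ - r₂) ^ (2*H - 2) * (r₁ - s) ^ (2*H - 2*γ)) := by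
        have hr₁r₂ : 0 ≤ r₁ - r₂ := by linarith [hr₂.2]
        have hr₁s : 0 ≤ r₁ - s := by linarith [hr₂.1, hr₂.2]
        gcongr ?_ * _
        exact mul_le_mul h₁ h₂ (rpow_nonneg hr₂τ.le _) (rpow_nonneg hτt.le _)
    _ = _ := by rw [hsq]; ring

lemma volterraIntegrand_le_near (hγ : 0 ≤ γ) (htτ : t < τ) {r₁ r₂ : ℝ} (hr₁ : r₁ < t)
    (hr₂ : r₂ ∈ Ioo s r₁) :
    volterraIntegrand H γ s τ r₁ r₂
      ≤ (t - r₁) ^ (-γ) * (r₁ - s) ^ (2*H - 2*γ) * (r₁ - r₂) ^ (2*H - 2 - γ) := by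
  have hr₁r₂ : 0 < r₁ - r₂ := by linarith [hr₂.2]
  have hr₁s : 0 ≤ r₁ - s := by linarith [hr₂.1, hr₂.2]
  have h₁ : (τ - r₁) ^ (-γ) ≤ (t - r₁) ^ (-γ) :=
    rpow_le_rpow_of_nonpos (by linarith) (by linarith) (by linarith)
  have h₂ : (τ - r₂) ^ (-γ) ≤ (r₁ - r₂) ^ (-γ) :=
    rpow_le_rpow_of_nonpos hr₁r₂ (by linarith) (by linarith)
  calc volterraIntegrand H γ s τ r₁ r₂
      = (τ - r₁) ^ (-γ) * (τ - r₂) ^ (-γ) * ((r₁ - r₂) ^ (2*H - 2) * (r₁ - s) ^ (2*H - 2*γ)) := by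
        rw [volterraIntegrand, abs_of_pos hr₁r₂]; ring
    _ ≤ (t - r₁) ^ (-γ) * (r₁ - r₂) ^ (-γ) * ((r₁ - r₂) ^ (2*H - 2) * (r₁ - s) ^ (2*H - 2*γ)) := by
        gcongr ?_ * _
        exact mul_le_mul h₁ h₂ (rpow_nonneg (by linarith [hr₂.2]) _)
          (rpow_nonneg (by linarith) _)
    _ = _ := by
        rw [show 2*H - 2 - γ = -γ + (2*H - 2) by ring, rpow_add hr₁r₂]; ring

lemma integral_volterraIntegrand_le_far (hγ : 0 ≤ γ) (hγH : γ < 2*H - 1) (htτ : t < τ)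
    {r₁ : ℝ} (hr₁ : r₁ ∈ Ioo s t) :
    ∫ r₂ in s..r₁, volterraIntegrand H γ s τ r₁ r₂
      ≤ (2*H - 1)⁻¹ * (τ - t) ^ (-(2*γ)) * (t - s) ^ (4*H - 2*γ - 1) := by
  have hr₁s : 0 < r₁ - s := sub_pos.mpr hr₁.1
  calc ∫ r₂ in s..r₁, volterraIntegrand H γ s τ r₁ r₂
      ≤ (τ - t) ^ (-(2*γ)) * (r₁ - s) ^ (2*H - 2*γ) * ((r₁ - s) ^ (2*H - 2 + 1) / (2*H - 2 + 1)) :=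
        integral_le_mul_sub_rpow hr₁.1.le (by linarith) (by positivity)
          fun r₂ hr₂ => volterraIntegrand_le_far hγ htτ hr₁.2.le hr₂
    _ = (2*H - 1)⁻¹ * (τ - t) ^ (-(2*γ)) * (r₁ - s) ^ (4*H - 2*γ - 1) := by
        rw [show 2*H - 2 + 1 = 2*H - 1 by ring,
          show 4*H - 2*γ - 1 = (2*H - 2*γ) + (2*H - 1) by ring, rpow_add hr₁s]
        ring
    _ ≤ (2*H - 1)⁻¹ * (τ - t) ^ (-(2*γ)) * (t - s) ^ (4*H - 2*γ - 1) := by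
        have : 0 < 2*H - 1 := by linarith
        gcongr
        · linarith
        · linarith [hr₁.2]

lemma integral_volterraIntegrand_le_near (hγ : 0 ≤ γ) (hγH : γ < 2*H - 1) (hγ1 : γ < 1)
    (htτ : t < τ) {r₁ : ℝ} (hr₁ : r₁ ∈ Ioo s t) :
    ∫ r₂ in s..r₁, volterraIntegrand H γ s τ r₁ r₂
      ≤ (2*H - 1 - γ)⁻¹ * (t - s) ^ (4*H - 1 - 3*γ) * (t - r₁) ^ (-γ) := by
  have hr₁s : 0 < r₁ - s := sub_pos.mpr hr₁.1
  have htr₁ : 0 < t - r₁ := sub_pos.mpr hr₁.2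
  calc ∫ r₂ in s..r₁, volterraIntegrand H γ s τ r₁ r₂
      ≤ (t - r₁) ^ (-γ) * (r₁ - s) ^ (2*H - 2*γ)
          * ((r₁ - s) ^ (2*H - 2 - γ + 1) / (2*H - 2 - γ + 1)) :=
        integral_le_mul_sub_rpow hr₁.1.le (by linarith) (by positivity)
          fun r₂ hr₂ => volterraIntegrand_le_near hγ htτ hr₁.2 hr₂
    _ = (2*H - 1 - γ)⁻¹ * (r₁ - s) ^ (4*H - 1 - 3*γ) * (t - r₁) ^ (-γ) := by
        rw [show 2*H - 2 - γ + 1 = 2*H - 1 - γ by ring,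
          show 4*H - 1 - 3*γ = (2*H - 2*γ) + (2*H - 1 - γ) by ring, rpow_add hr₁s]
        ring
    _ ≤ (2*H - 1 - γ)⁻¹ * (t - s) ^ (4*H - 1 - 3*γ) * (t - r₁) ^ (-γ) := by
        have : 0 < 2*H - 1 - γ := by linarith
        gcongr
        · linarith
        · linarith [hr₁.2]

lemma integral_integral_volterraIntegrand_le_far (hγ : 0 ≤ γ) (hγH : γ < 2*H - 1)
    (hst : s < t) (htτ : t < τ) :
    ∫ r₁ in s..t, ∫ r₂ in s..r₁, volterraIntegrand H γ s τ r₁ r₂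
      ≤ (2*H - 1)⁻¹ * ((τ - t) ^ (-(2*γ)) * (t - s) ^ (4*H - 2*γ)) := by
  have hts : 0 < t - s := sub_pos.mpr hst
  have : 0 < 2*H - 1 := by linarith
  calc ∫ r₁ in s..t, ∫ r₂ in s..r₁, volterraIntegrand H γ s τ r₁ r₂
      ≤ (2*H - 1)⁻¹ * (τ - t) ^ (-(2*γ)) * (t - s) ^ (4*H - 2*γ - 1) * (t - s) :=
        integral_le_mul_sub hst.le (by positivity)
          fun r₁ hr₁ => integral_volterraIntegrand_le_far hγ hγH htτ hr₁
    _ = (2*H - 1)⁻¹ * ((τ - t) ^ (-(2*γ)) * (t - s) ^ (4*H - 2*γ)) := by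
        rw [mul_assoc _ _ (t - s), ← rpow_add_one hts.ne', sub_add_cancel]
        ring

lemma integral_integral_volterraIntegrand_le_near (hγ : 0 ≤ γ) (hγH : γ < 2*H - 1)
    (hγ1 : γ < 1) (hst : s < t) (htτ : t < τ) :
    ∫ r₁ in s..t, ∫ r₂ in s..r₁, volterraIntegrand H γ s τ r₁ r₂
      ≤ ((2*H - 1 - γ) * (1 - γ))⁻¹ * (t - s) ^ (4*H - 4*γ) := by
  have hts : 0 < t - s := sub_pos.mpr hst
  have : 0 < 2*H - 1 - γ := by linarith
  calc ∫ r₁ in s..t, ∫ r₂ in s..r₁, volterraIntegrand H γ s τ r₁ r₂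
      ≤ (2*H - 1 - γ)⁻¹ * (t - s) ^ (4*H - 1 - 3*γ) * ((t - s) ^ (-γ + 1) / (-γ + 1)) :=
        integral_le_mul_sub_rpow hst.le (by linarith) (by positivity)
          fun r₁ hr₁ => integral_volterraIntegrand_le_near hγ hγH hγ1 htτ hr₁
    _ = ((2*H - 1 - γ) * (1 - γ))⁻¹ * (t - s) ^ (4*H - 4*γ) := by
        rw [show -γ + 1 = 1 - γ by ring,
          show 4*H - 4*γ = (4*H - 1 - 3*γ) + (1 - γ) by ring, rpow_add hts, mul_inv]
        ring

end Bounds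

theorem stmt_11_general (H γ : ℝ) (hH2 : H < 1) (hγ0 : 0 < γ) (hγH : γ < 2*H - 1) :
    ∃ C > 0, ∀ s t τ : ℝ, 0 ≤ s → s < t → t < τ →
      (∫ r1 in s..t, ∫ r2 in s..r1,
        (τ - r1) ^ (-γ) * (τ - r2) ^ (-γ) * |r1 - r2| ^ (2*H - 2) * (r1 - s) ^ (2*H - 2*γ))
      ≤ C * min ((τ - t) ^ (-(2*γ)) * (t - s) ^ (4*H - 2*γ)) ((t - s) ^ (4*H - 4*γ)) := by
  have hγ1 : γ < 1 := by linarith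
  have hCfar : 0 < (2*H - 1)⁻¹ := inv_pos.mpr (by linarith)
  refine ⟨max (2*H - 1)⁻¹ ((2*H - 1 - γ) * (1 - γ))⁻¹, lt_max_of_lt_left hCfar,
    fun s t τ _ hst htτ => ?_⟩
  rw [mul_min_of_nonneg _ _ (le_max_of_le_left hCfar.le)]
  refine le_min ?_ ?_
  · refine (integral_integral_volterraIntegrand_le_far hγ0.le hγH hst htτ).trans ?_
    gcongr
    exact le_max_left _ _
  · refine (integral_integral_volterraIntegrand_le_near hγ0.le hγH hγ1 hst htτ).trans ?_
    gcongr
    exact le_max_right _ _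

theorem stmt_11 (H γ : ℝ) (hH1 : 1/2 < H) (hH2 : H < 1) (hγ0 : 0 < γ) (hγH : γ < 2*H - 1) :
    ∃ C > 0, ∀ s t τ : ℝ, 0 ≤ s → s < t → t < τ →
      (∫ r1 in s..t, ∫ r2 in s..r1,
        (τ - r1) ^ (-γ) * (τ - r2) ^ (-γ) * |r1 - r2| ^ (2*H - 2) * (r1 - s) ^ (2*H - 2*γ))
      ≤ C * min ((τ - t) ^ (-(2*γ)) * (t - s) ^ (4*H - 2*γ)) ((t - s) ^ (4*H - 4*γ)) :=
  stmt_11_general H γ hH2 hγ0 hγH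
end

section
/- Let H∈(1/2,1), γ∈(0,2H−1). For 0≤s<t<τ, ∫_s^t ∫_s^r (τ−r)^{−γ}(r−l)^{−γ}(r−l)^{2H−2} dl dr ≤ C · min( (τ−t)^{−γ}(t−s)^{2H−γ}, (t−s)^{2H−2γ} ), where C depends only on H and γ. -/
/-!
With `q = 2H - 1 - γ > 0` the inner integral is explicit, `(τ - r)^(-γ) (r - s)^q / q`. The outer
integral is then bounded in two ways: freezing the decreasing weight `(τ - r)^(-γ)` at `r = t`
gives the first term of the minimum, while dominating it by `(t - r)^(-γ)`, integrable because
`γ < 1`, and `(r - s)^q` by `(t - s)^q` gives the second.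
-/

open MeasureTheory Real

theorem integral_rpow_sub_left {a b p : ℝ} (hp : -1 < p) :
    ∫ x in a..b, (b - x) ^ p = (b - a) ^ (p + 1) / (p + 1) := by
  rw [intervalIntegral.integral_comp_sub_left (fun x => x ^ p), sub_self, integral_rpow (.inl hp),
    zero_rpow (by linarith), sub_zero]

theorem integral_rpow_sub_right {a b p : ℝ} (hp : -1 < p) :
    ∫ x in a..b, (x - a) ^ p = (b - a) ^ (p + 1) / (p + 1) := by
  rw [intervalIntegral.integral_comp_sub_right (fun x => x ^ p), sub_self, integral_rpow (.inl hp),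
    zero_rpow (by linarith), sub_zero]

theorem integral_const_mul_rpow_sub_mul_rpow_sub {a b c p p' : ℝ} (hab : a ≤ b)
    (hp : -1 < p + p') (hp0 : p + p' ≠ 0) :
    ∫ x in a..b, c * (b - x) ^ p * (b - x) ^ p'
      = c * ((b - a) ^ (p + p' + 1) / (p + p' + 1)) := by
  have hcongr : ∀ x ∈ Set.uIcc a b,
      c * (b - x) ^ p * (b - x) ^ p' = c * (b - x) ^ (p + p') := by
    intro x hx
    rw [Set.uIcc_of_le hab] at hx
    rw [mul_assoc, rpow_add' (by linarith [hx.2]) hp0]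
  rw [intervalIntegral.integral_congr hcongr, intervalIntegral.integral_const_mul,
    integral_rpow_sub_left hp]

section SingularWeight

variable {s t τ γ q : ℝ}

theorem intervalIntegrable_rpow_sub_mul_rpow_sub (hst : s ≤ t) (htτ : t < τ) (hq : 0 ≤ q) :
    IntervalIntegrable (fun r => (τ - r) ^ (-γ) * (r - s) ^ q) volume s t := by
  refine ContinuousOn.intervalIntegrable fun r hr => ContinuousAt.continuousWithinAt ?_
  rw [Set.uIcc_of_le hst] at hr
  have hτr : τ - r ≠ 0 := by linarith [hr.2]
  fun_prop (disch := first | exact .inl hτr | exact .inr hq)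

theorem integral_rpow_sub_mul_rpow_sub_le_mul (hst : s ≤ t) (htτ : t < τ) (hγ : 0 ≤ γ)
    (hq : 0 ≤ q) :
    ∫ r in s..t, (τ - r) ^ (-γ) * (r - s) ^ q
      ≤ (τ - t) ^ (-γ) * ((t - s) ^ (q + 1) / (q + 1)) := by
  have hint := intervalIntegrable_rpow_sub_mul_rpow_sub (γ := γ) hst htτ hq
  calc ∫ r in s..t, (τ - r) ^ (-γ) * (r - s) ^ q
      ≤ ∫ r in s..t, (τ - t) ^ (-γ) * (r - s) ^ q := by
        refine intervalIntegral.integral_mono_on hst hint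
          ((Continuous.intervalIntegrable (by fun_prop (disch := exact hq))) _ _)
          fun r hr => ?_
        exact mul_le_mul_of_nonneg_right
          (rpow_le_rpow_of_nonpos (by linarith) (by linarith [hr.2]) (by linarith))
          (rpow_nonneg (by linarith [hr.1]) _)
    _ = (τ - t) ^ (-γ) * ((t - s) ^ (q + 1) / (q + 1)) := by
        rw [intervalIntegral.integral_const_mul, integral_rpow_sub_right (by linarith)]

theorem integral_rpow_sub_mul_rpow_sub_le_rpow (hst : s ≤ t) (htτ : t < τ) (hγ0 : 0 ≤ γ)
    (hγ1 : γ < 1) (hq : 0 ≤ q) :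
    ∫ r in s..t, (τ - r) ^ (-γ) * (r - s) ^ q ≤ (t - s) ^ (q + 1 - γ) / (1 - γ) := by
  have hsing : IntervalIntegrable (fun r => (t - r) ^ (-γ)) volume s t := by
    simpa using (intervalIntegral.intervalIntegrable_rpow' (a := t - s) (b := 0)
      (by linarith : -1 < -γ)).comp_sub_left t
  calc ∫ r in s..t, (τ - r) ^ (-γ) * (r - s) ^ q
      ≤ ∫ r in s..t, (t - r) ^ (-γ) * (t - s) ^ q := by
        refine intervalIntegral.integral_mono_on_of_le_Ioo hst
          (intervalIntegrable_rpow_sub_mul_rpow_sub hst htτ hq) (hsing.mul_const _) fun r hr => ?_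
        have hsr : 0 ≤ r - s := by linarith [hr.1]
        calc (τ - r) ^ (-γ) * (r - s) ^ q
            ≤ (t - r) ^ (-γ) * (r - s) ^ q := mul_le_mul_of_nonneg_right
              (rpow_le_rpow_of_nonpos (by linarith [hr.2]) (by linarith) (by linarith))
              (rpow_nonneg hsr _)
          _ ≤ (t - r) ^ (-γ) * (t - s) ^ q := mul_le_mul_of_nonneg_left
              (rpow_le_rpow hsr (by linarith [hr.2]) hq) (rpow_nonneg (by linarith [hr.2]) _)
    _ = (t - s) ^ (q + 1 - γ) / (1 - γ) := by
        rw [intervalIntegral.integral_mul_const, integral_rpow_sub_left (by linarith),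
          show q + 1 - γ = -γ + 1 + q by ring,
          rpow_add' (y := -γ + 1) (z := q) (by linarith) (by linarith)]
        ring

theorem integral_rpow_sub_mul_rpow_sub_le_min (hst : s ≤ t) (htτ : t < τ) (hγ0 : 0 ≤ γ)
    (hγ1 : γ < 1) (hq : 0 ≤ q) :
    ∫ r in s..t, (τ - r) ^ (-γ) * (r - s) ^ q
      ≤ (1 - γ)⁻¹ * min ((τ - t) ^ (-γ) * (t - s) ^ (q + 1)) ((t - s) ^ (q + 1 - γ)) := by
  rw [mul_min_of_nonneg _ _ (inv_nonneg.2 (by linarith))]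
  refine le_min ((integral_rpow_sub_mul_rpow_sub_le_mul hst htτ hγ0 hq).trans ?_)
    ((integral_rpow_sub_mul_rpow_sub_le_rpow hst htτ hγ0 hγ1 hq).trans_eq (div_eq_inv_mul _ _))
  rw [mul_div_assoc', div_eq_inv_mul]
  gcongr
  linarith

end SingularWeight

theorem stmt_12_general (H γ : ℝ) (hH2 : H < 1) (hγ0 : 0 < γ) (hγH : γ < 2*H - 1) :
    ∃ C > 0, ∀ s t τ : ℝ, 0 ≤ s → s < t → t < τ →
      (∫ r in s..t, ∫ l in s..r, (τ - r) ^ (-γ) * (r - l) ^ (-γ) * (r - l) ^ (2*H - 2))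
      ≤ C * min ((τ - t) ^ (-γ) * (t - s) ^ (2*H - γ)) ((t - s) ^ (2*H - 2*γ)) := by
  have hq : 0 < 2*H - 1 - γ := by linarith
  have hγ1 : 0 < 1 - γ := by linarith
  refine ⟨(2*H - 1 - γ)⁻¹ * (1 - γ)⁻¹, by positivity, fun s t τ _ hst htτ => ?_⟩
  have hinner : ∀ r ∈ Set.uIcc s t,
      ∫ l in s..r, (τ - r) ^ (-γ) * (r - l) ^ (-γ) * (r - l) ^ (2*H - 2)
        = (τ - r) ^ (-γ) * ((r - s) ^ (2*H - 1 - γ) / (2*H - 1 - γ)) := by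
    intro r hr
    rw [integral_const_mul_rpow_sub_mul_rpow_sub (Set.uIcc_of_le hst.le ▸ hr).1 (by linarith)
      (by linarith), show -γ + (2*H - 2) + 1 = 2*H - 1 - γ by ring]
  calc (∫ r in s..t, ∫ l in s..r, (τ - r) ^ (-γ) * (r - l) ^ (-γ) * (r - l) ^ (2*H - 2))
      = (2*H - 1 - γ)⁻¹ * ∫ r in s..t, (τ - r) ^ (-γ) * (r - s) ^ (2*H - 1 - γ) := by
        rw [intervalIntegral.integral_congr hinner, ← intervalIntegral.integral_const_mul]
        congr with r
        ring
    _ ≤ (2*H - 1 - γ)⁻¹ * ((1 - γ)⁻¹ *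
          min ((τ - t) ^ (-γ) * (t - s) ^ (2*H - 1 - γ + 1))
            ((t - s) ^ (2*H - 1 - γ + 1 - γ))) := by
        gcongr
        exact integral_rpow_sub_mul_rpow_sub_le_min hst.le htτ hγ0.le (by linarith) hq.le
    _ = _ := by
        rw [show 2*H - 1 - γ + 1 = 2*H - γ by ring, show 2*H - γ - γ = 2*H - 2*γ by ring,
          mul_assoc]

theorem stmt_12 (H γ : ℝ) (hH1 : 1/2 < H) (hH2 : H < 1) (hγ0 : 0 < γ) (hγH : γ < 2*H - 1) :
    ∃ C > 0, ∀ s t τ : ℝ, 0 ≤ s → s < t → t < τ →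
      (∫ r in s..t, ∫ l in s..r, (τ - r) ^ (-γ) * (r - l) ^ (-γ) * (r - l) ^ (2*H - 2))
      ≤ C * min ((τ - t) ^ (-γ) * (t - s) ^ (2*H - γ)) ((t - s) ^ (2*H - 2*γ)) :=
  stmt_12_general H γ hH2 hγ0 hγH
end
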